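/- arXiv:2005.02036 — 8 statements merged into one kernel-verified Lean document; each statement's English description precedes it below -/
import Mathlib

section
/- Let G be a group and let {sₙ}ₙ≥₁ be a sequence of elements of G such that s₁ has infinite order and sₙⁿ = sₙ₋₁ for all n ≥ 2. Then the subgroup of G generated by {sₙ : n ≥ 1} is isomorphic to the additive group ℚ. -/
open Nat
section aux
variable {G : Type*} [Group G] (s : ℕ → G)
  (hroot : ∀ n : ℕ, 2 ≤ n → (s n) ^ n = s (n - 1))

include hroot in
lemma rootseq_pow_div : ∀ m, 1 ≤ m → ∀ n, m ≤ n → s n ^ (n ! / m !) = s m := by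
  intro m hm n hn
  induction n, hn using Nat.le_induction with
  | base => simp [Nat.div_self (Nat.factorial_pos m)]
  | succ n hmn ih =>
    have hdvd : m ! ∣ n ! := Nat.factorial_dvd_factorial hmn
    have : (n+1)! / m ! = (n+1) * (n ! / m !) := by
      rw [Nat.factorial_succ, Nat.mul_div_assoc _ hdvd]
    rw [this, pow_mul, hroot (n+1) (by omega)]
    simpa using ih
include hroot in
lemma rootseq_pow_eq : ∀ n, 1 ≤ n → s n ^ (n !) = s 1 := by
  intro n hn
  simpa [Nat.factorial_one] using rootseq_pow_div s hroot 1 le_rfl n hn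

end aux

/-- If `s₁` has infinite order and `sₙⁿ = sₙ₋₁` for all `n ≥ 2`, then the subgroup
generated by the `sₙ` (n ≥ 1) is isomorphic to the additive group ℚ. -/
theorem subgroup_generated_by_root_sequence_iso_rat {G : Type*} [Group G]
    (s : ℕ → G) (h1 : ¬ IsOfFinOrder (s 1))
    (hroot : ∀ n : ℕ, 2 ≤ n → (s n) ^ n = s (n - 1)) :
    Nonempty ((Subgroup.closure {g : G | ∃ n : ℕ, 1 ≤ n ∧ g = s n}) ≃*
      Multiplicative ℚ) := by
  -- integer witness lemma
  have hint : ∀ (p : ℚ) (n : ℕ), p.den ≤ n →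
      ((p.num * ((n ! / p.den : ℕ) : ℤ) : ℤ) : ℚ) = p * n ! := by
    intro p n h
    have hd : p.den ∣ n ! := dvd_trans (Nat.dvd_factorial p.pos le_rfl)
      (Nat.factorial_dvd_factorial h)
    have hden : ((p.den : ℚ)) ≠ 0 := by exact_mod_cast p.den_nz
    rw [Int.cast_mul, Int.cast_natCast, Nat.cast_div hd hden]
    rw [mul_div_assoc', div_eq_iff hden, mul_right_comm, Rat.mul_den_eq_num]
  -- the map
  set F : ℚ → G := fun q => s q.den ^ (q.num * ((q.den ! / q.den : ℕ) : ℤ)) with hF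
  have key : ∀ (q : ℚ) (n : ℕ), 1 ≤ n → ∀ a : ℤ, (a : ℚ) = q * n ! →
      F q = s n ^ a := by
    intro q n hn a ha
    have hd1 : 1 ≤ q.den := q.pos
    set N := max q.den n with hN
    have hdN : q.den ≤ N := le_max_left _ _
    have hnN : n ≤ N := le_max_right _ _
    have h1N : 1 ≤ N := le_trans hn hnN
    have ha' : ((q.num * ((q.den ! / q.den : ℕ) : ℤ) : ℤ) : ℚ) = q * q.den ! :=
      hint q q.den le_rfl
    have e1 : s q.den = s N ^ (N ! / q.den !) := (rootseq_pow_div s hroot q.den hd1 N hdN).symm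
    have e2 : s n = s N ^ (N ! / n !) := (rootseq_pow_div s hroot n hn N hnN).symm
    have hdvd1 : q.den ! ∣ N ! := Nat.factorial_dvd_factorial hdN
    have hdvd2 : n ! ∣ N ! := Nat.factorial_dvd_factorial hnN
    rw [hF]
    simp only
    rw [e1, e2, ← zpow_natCast (s N), ← zpow_mul, ← zpow_natCast (s N) (N ! / n !), ← zpow_mul]
    congr 1
    set A : ℤ := q.num * ((q.den ! / q.den : ℕ) : ℤ) with hA
    have hcross : A * (n ! : ℤ) = a * (q.den ! : ℤ) := by
      have h : (A : ℚ) * (n ! : ℚ) = (a : ℚ) * (q.den ! : ℚ) := by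
        rw [ha', ha]; ring
      exact_mod_cast h
    have e3 : ((q.den ! : ℤ)) * ((N ! / q.den ! : ℕ) : ℤ) = (N ! : ℤ) := by
      exact_mod_cast Nat.mul_div_cancel' hdvd1
    have e4 : ((n ! : ℤ)) * ((N ! / n ! : ℕ) : ℤ) = (N ! : ℤ) := by
      exact_mod_cast Nat.mul_div_cancel' hdvd2
    have hne : ((q.den ! : ℤ)) * (n ! : ℤ) ≠ 0 := by positivity
    apply mul_left_cancel₀ hne
    linear_combination ((n ! : ℤ) * A) * e3 - ((q.den ! : ℤ) * a) * e4 + ((N ! : ℤ)) * hcross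
  -- F at 1/n!
  have hFgen : ∀ n : ℕ, 1 ≤ n → F ((n ! : ℚ)⁻¹) = s n := by
    intro n hn
    have hne : ((n ! : ℚ)) ≠ 0 := by exact_mod_cast (Nat.factorial_pos n).ne'
    rw [key ((n ! : ℚ)⁻¹) n hn 1 (by rw [inv_mul_cancel₀ hne]; norm_num), zpow_one]
  -- additivity
  have hadd : ∀ p q : ℚ, F (p + q) = F p * F q := by
    intro p q
    set n := p.den + q.den with hn
    have hn1 : 1 ≤ n := by have := p.pos; omega
    have hp : p.den ≤ n := by omega
    have hq : q.den ≤ n := by omega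
    set ap : ℤ := p.num * ((n ! / p.den : ℕ) : ℤ) with hap
    set aq : ℤ := q.num * ((n ! / q.den : ℕ) : ℤ) with haq
    have hpa : ((ap : ℚ)) = p * n ! := hint p n hp
    have hqa : ((aq : ℚ)) = q * n ! := hint q n hq
    rw [key p n hn1 ap hpa, key q n hn1 aq hqa,
      key (p + q) n hn1 (ap + aq) (by push_cast [hpa, hqa]; ring), zpow_add]
  have hzero : F 0 = 1 := by
    rw [key 0 1 le_rfl 0 (by norm_num), zpow_zero]
  -- the monoid hom
  let f : Multiplicative ℚ →* G :=
    { toFun := fun x => F (Multiplicative.toAdd x)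
      map_one' := hzero
      map_mul' := fun x y => hadd _ _ }
  -- each s n has infinite order
  have hinf : ∀ n : ℕ, 1 ≤ n → ¬ IsOfFinOrder (s n) := by
    intro n hn h
    exact h1 (rootseq_pow_eq s hroot n hn ▸ h.pow)
  -- injectivity
  have hinj : Function.Injective f := by
    rw [injective_iff_map_eq_one]
    intro q hq
    have hd : q.toAdd.den ≤ q.toAdd.den := le_rfl
    have := key q.toAdd q.toAdd.den q.toAdd.pos _ (hint q.toAdd q.toAdd.den le_rfl)
    rw [show f q = F q.toAdd from rfl, this] at hq
    have hA : q.toAdd.num * ((q.toAdd.den ! / q.toAdd.den : ℕ) : ℤ) = 0 := by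
      by_contra hne
      exact hinf q.toAdd.den q.toAdd.pos (isOfFinOrder_iff_zpow_eq_one.mpr ⟨_, hne, hq⟩)
    have hdvd : q.toAdd.den ∣ q.toAdd.den ! := Nat.dvd_factorial q.toAdd.pos le_rfl
    have hpos : (0 : ℕ) < q.toAdd.den ! / q.toAdd.den :=
      Nat.div_pos (Nat.le_of_dvd (Nat.factorial_pos _) hdvd) q.toAdd.pos
    have hnum : q.toAdd.num = 0 := by
      rcases mul_eq_zero.mp hA with h | h
      · exact h
      · exfalso; exact_mod_cast absurd h (by exact_mod_cast hpos.ne')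
    have h0 : Multiplicative.toAdd q = Multiplicative.toAdd (1 : Multiplicative ℚ) := by
      simpa using Rat.zero_of_num_zero hnum
    exact Multiplicative.toAdd.injective h0
  -- range = closure
  have hrange : f.range = Subgroup.closure {g : G | ∃ n : ℕ, 1 ≤ n ∧ g = s n} := by
    apply le_antisymm
    · rintro x ⟨q, rfl⟩
      have := key q.toAdd q.toAdd.den q.toAdd.pos _ (hint q.toAdd q.toAdd.den le_rfl)
      rw [show f q = F q.toAdd from rfl, this]
      have hmem : s q.toAdd.den ∈ {g : G | ∃ n : ℕ, 1 ≤ n ∧ g = s n} :=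
        ⟨q.toAdd.den, q.toAdd.pos, rfl⟩
      exact zpow_mem (Subgroup.subset_closure hmem) _
    · rw [Subgroup.closure_le]
      rintro x ⟨n, hn, rfl⟩
      exact MonoidHom.mem_range.mpr ⟨Multiplicative.ofAdd ((n ! : ℚ)⁻¹), hFgen n hn⟩
  exact ⟨((MulEquiv.subgroupCongr hrange).symm.trans
    (MonoidHom.ofInjective hinj).symm : _)⟩
end

section
/- If a group G is torsion-free and every element of G admits an n-th root for every n ≥ 2, and G contains an element g of infinite order together with a choice of iterated roots s₁ = g, sₙⁿ = sₙ₋₁, then G contains a subgroup isomorphic to ℚ. -/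
/-!
Take roots `s (n + 1) ^ (n + 1) = s n` starting from `s 0 = g`; then `s m` is an `m !`-th root
of `g`, so `q ↦ s m ^ (q * m !)` (for any `m` with `q.den ∣ m !`) is a well-defined
homomorphism `ℚ → G`. It is injective because every `s m` has infinite order along with `g`.
-/

/-- A predicate on a monoid saying that only `1` is of finite order (the Mathlib definition
`Monoid.IsTorsionFree`, since removed from Mathlib, restated verbatim). -/
def Monoid.IsTorsionFree (G : Type*) [Monoid G] :=
  ∀ g : G, g ≠ 1 → ¬IsOfFinOrder g

open Nat

theorem Rat.num_mul_factorial_div_den (q : ℚ) {m : ℕ} (h : q.den ≤ m) :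
    ((q.num * (m ! / q.den : ℕ) : ℤ) : ℚ) = q * m ! := by
  have hm : (m ! : ℚ) = q.den * (m ! / q.den : ℕ) := by
    rw [← Nat.cast_mul, Nat.mul_div_cancel' (Nat.dvd_factorial q.pos h)]
  rw [Int.cast_mul, Int.cast_natCast, hm, ← mul_assoc, Rat.mul_den_eq_num]

theorem exists_seq_pow_succ_eq {M : Type*} [Monoid M] (root : ∀ (n : ℕ) (x : M), ∃ f, f ^ (n + 1) = x)
    (g : M) : ∃ s : ℕ → M, s 0 = g ∧ ∀ n, s (n + 1) ^ (n + 1) = s n := by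
  choose r hr using root
  exact ⟨fun n => Nat.rec g (fun n x => r n x) n, rfl, fun n => hr _ _⟩

section FactorialRoots

variable {G : Type*} [Group G] {s : ℕ → G} (hs : ∀ n, s (n + 1) ^ (n + 1) = s n)
include hs

theorem pow_factorial_div_factorial_of_pow_succ_eq {n m : ℕ} (hnm : n ≤ m) :
    s m ^ (m ! / n !) = s n := by
  induction m, hnm using Nat.le_induction with
  | base => rw [Nat.div_self (factorial_pos n), pow_one]
  | succ m hnm ih =>
    rw [factorial_succ, Nat.mul_div_assoc _ (factorial_dvd_factorial hnm), pow_mul, hs, ih]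

theorem zpow_eq_zpow_of_cast_eq_mul_factorial {q : ℚ} {m m' : ℕ} {k k' : ℤ}
    (hk : (k : ℚ) = q * m !) (hk' : (k' : ℚ) = q * m' !) : s m ^ k = s m' ^ k' := by
  wlog hmm' : m ≤ m' generalizing m m' k k'
  · exact (this hk' hk (le_of_not_ge hmm')).symm
  obtain ⟨d, hd⟩ := factorial_dvd_factorial hmm'
  have hk'k : k' = d * k := by
    have : (k' : ℚ) = d * k := by rw [hk', hk, hd, Nat.cast_mul]; ring
    exact_mod_cast this
  rw [hk'k, zpow_mul, zpow_natCast, ← pow_factorial_div_factorial_of_pow_succ_eq hs hmm', hd,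
    Nat.mul_div_cancel_left _ (factorial_pos m)]

theorem not_isOfFinOrder_of_pow_succ_eq (h0 : ¬IsOfFinOrder (s 0)) (n : ℕ) :
    ¬IsOfFinOrder (s n) := by
  induction n with
  | zero => exact h0
  | succ n ih => exact fun hfin => ih (hs n ▸ hfin.pow)

/-- `q ↦ s m ^ (q * m !)` at the level `m = q.den`, where `q * m !` is the integer
`q.num * (m ! / q.den)`. -/
noncomputable def factorialRootHom : Multiplicative ℚ →* G where
  toFun q := s q.toAdd.den ^ (q.toAdd.num * (q.toAdd.den ! / q.toAdd.den : ℕ))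
  map_one' := by simp
  map_mul' a b := by
    obtain ⟨a, rfl⟩ := Multiplicative.ofAdd.surjective a
    obtain ⟨b, rfl⟩ := Multiplicative.ofAdd.surjective b
    set m := max a.den b.den
    have ha := a.num_mul_factorial_div_den (le_max_left a.den b.den)
    have hb := b.num_mul_factorial_div_den (le_max_right a.den b.den)
    have hab : (((a.num * (m ! / a.den : ℕ) + b.num * (m ! / b.den : ℕ) : ℤ)) : ℚ)
        = (a + b) * m ! := by
      push_cast at ha hb ⊢
      rw [ha, hb, add_mul]
    simp only [toAdd_mul, toAdd_ofAdd]
    rw [zpow_eq_zpow_of_cast_eq_mul_factorial hs ((a + b).num_mul_factorial_div_den le_rfl) hab,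
      zpow_add, zpow_eq_zpow_of_cast_eq_mul_factorial hs ha (a.num_mul_factorial_div_den le_rfl),
      zpow_eq_zpow_of_cast_eq_mul_factorial hs hb (b.num_mul_factorial_div_den le_rfl)]

theorem factorialRootHom_injective (h0 : ¬IsOfFinOrder (s 0)) :
    Function.Injective (factorialRootHom hs) := by
  rw [injective_iff_map_eq_one]
  intro q hq
  obtain ⟨q, rfl⟩ := Multiplicative.ofAdd.surjective q
  have hinj := injective_zpow_iff_not_isOfFinOrder.mpr
    (not_isOfFinOrder_of_pow_succ_eq hs h0 q.den)
  have hk : q.num * (q.den ! / q.den : ℕ) = 0 := hinj (hq.trans (zpow_zero _).symm)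
  have hq0 : q * q.den ! = 0 := by
    rw [← q.num_mul_factorial_div_den le_rfl, hk, Int.cast_zero]
  simpa [factorial_ne_zero] using hq0

end FactorialRoots

theorem torsionFree_divisible_contains_rat_general {G : Type*} [Group G]
    (hroots : ∀ g : G, ∀ n : ℕ, 2 ≤ n → ∃ f : G, f ^ n = g)
    (g : G) (hg : ¬ IsOfFinOrder g) :
    ∃ H : Subgroup G, Nonempty (H ≃* Multiplicative ℚ) := by
  have root : ∀ (n : ℕ) (x : G), ∃ f, f ^ (n + 1) = x
    | 0, x => ⟨x, pow_one x⟩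
    | n + 1, x => hroots x (n + 2) (by omega)
  obtain ⟨s, rfl, hs⟩ := exists_seq_pow_succ_eq root g
  exact ⟨_, ⟨(MonoidHom.ofInjective (factorialRootHom_injective hs hg)).symm⟩⟩

/-- A nontrivial torsion-free group in which every element has n-th roots for all n ≥ 2
contains a subgroup isomorphic to ℚ. -/
theorem torsionFree_divisible_contains_rat {G : Type*} [Group G]
    (htf : Monoid.IsTorsionFree G)
    (hroots : ∀ g : G, ∀ n : ℕ, 2 ≤ n → ∃ f : G, f ^ n = g)
    (g : G) (hg : ¬ IsOfFinOrder g) :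
    ∃ H : Subgroup G, Nonempty (H ≃* Multiplicative ℚ) :=
  torsionFree_divisible_contains_rat_general hroots g hg
end

section
/- Let G be a torsion-free group and let z be an element of infinite order in the center Z(G) of G, such that the quotient G/⟨z⟩ contains no subgroup isomorphic to ℚ. Then every subgroup of G isomorphic to ℚ contains z. -/
/-- If `G` is torsion-free, `z` is central, and `G/⟨z⟩` has no subgroup isomorphic to ℚ,
then every subgroup of `G` isomorphic to ℚ contains `z`. -/
theorem rat_subgroups_contain_center {G : Type*} [Group G]
    (htf : ∀ g : G, g ≠ 1 → ¬IsOfFinOrder g)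
    (z : G) (hz : z ∈ Subgroup.center G)
    [hnorm : (Subgroup.zpowers z).Normal]
    (hq : ¬ ∃ ψ : Multiplicative ℚ →* G ⧸ Subgroup.zpowers z, Function.Injective ψ)
    (A : Subgroup G) (e : Multiplicative ℚ ≃* A) :
    z ∈ A := by
  set φ : Multiplicative ℚ →* G := A.subtype.comp e.toMonoidHom with hφ
  have hφinj : Function.Injective φ :=
    A.subtype_injective.comp e.injective
  set ψ : Multiplicative ℚ →* G ⧸ Subgroup.zpowers z :=
    (QuotientGroup.mk' (Subgroup.zpowers z)).comp φ with hψ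
  have hψni : ¬ Function.Injective ψ := fun h => hq ⟨ψ, h⟩
  -- find c ≠ 1 with φ c ∈ zpowers z
  rw [Function.not_injective_iff] at hψni
  obtain ⟨a, b, hab, hne⟩ := hψni
  set c : Multiplicative ℚ := a * b⁻¹ with hc
  have hc1 : c ≠ 1 := by
    intro h
    rw [hc, mul_inv_eq_one] at h
    exact hne h
  have hcz : φ c ∈ Subgroup.zpowers z := by
    have h1 : ψ c = 1 := by
      simp only [hc, map_mul, map_inv, hab, mul_inv_cancel]
    have h2 : ((φ c : G) : G ⧸ Subgroup.zpowers z) = 1 := h1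
    exact (QuotientGroup.eq_one_iff _).mp h2
  obtain ⟨n, hn⟩ := hcz
  simp only at hn
  have hn0 : n ≠ 0 := by
    intro h
    subst h
    simp only [zpow_zero] at hn
    exact hc1 (hφinj (by rw [map_one, ← hn]))
  set q : ℚ := Multiplicative.toAdd c with hq'
  set d : Multiplicative ℚ := Multiplicative.ofAdd (q / n) with hd
  have hdn : d ^ n = c := by
    rw [hd, ← ofAdd_zsmul]
    have h3 : n • (q / (n : ℚ)) = q := by
      rw [zsmul_eq_mul]
      field_simp
    rw [h3]
    rfl
  have hfn : (φ d) ^ n = z ^ n := by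
    rw [← map_zpow, hdn, ← hn]
  have hzc : Commute z (φ d) := (Subgroup.mem_center_iff.mp hz (φ d)).symm
  have hcomm : Commute z⁻¹ (φ d) := hzc.inv_left
  have hkey : (z⁻¹ * φ d) ^ n = 1 := by
    rw [hcomm.mul_zpow, hfn, inv_zpow, inv_mul_cancel]
  have heq1 : z⁻¹ * φ d = 1 := by
    by_contra hne1
    have hfin : IsOfFinOrder (z⁻¹ * φ d) := by
      rw [isOfFinOrder_iff_pow_eq_one]
      refine ⟨n.natAbs, by omega, ?_⟩
      rcases Int.natAbs_eq n with h | h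
      · rw [← zpow_natCast, ← h, hkey]
      · rw [← zpow_natCast, ← neg_neg (n.natAbs : ℤ), ← h, zpow_neg, hkey, inv_one]
    exact htf _ hne1 hfin
  have hzd : z = φ d := by rwa [inv_mul_eq_one] at heq1
  rw [hzd]
  exact (e d).2
end

section
/- Let g : ℝ → ℝ be a homeomorphism without fixed points with g(0) > 0, let n ≥ 2, choose points 0 = p₀ < p₁ < ⋯ < pₙ = g(0), and choose homeomorphisms fᵢ : [pᵢ₋₁, pᵢ] → [pᵢ, pᵢ₊₁] for 1 ≤ i < n; set fₙ = g ∘ f₁⁻¹ ∘ ⋯ ∘ fₙ₋₁⁻¹ : [pₙ₋₁, pₙ] → [pₙ, g(p₁)]. Define f : ℝ → ℝ to agree with fᵢ on each [pᵢ₋₁, pᵢ] and with gᵏ f g⁻ᵏ on [gᵏ(0), gᵏ⁺¹(0)] for k ≠ 0. Then f is a well-defined homeomorphism of ℝ and fⁿ = g. -/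
/-!
The conjugation condition says that `F` commutes with `g`, so everything reduces to the
fundamental domain `[0, g 0] = [p 0, p n]`. There `F` is strictly monotone piece by piece, and
`Fⁿ = g` holds on `[p 0, p 1]` by the choice of `f n`; since `Fⁿ` and `g` both commute with `F`,
and `F` maps `[p i, p (i + 1)]` onto the next piece, this identity propagates along the pieces.
Because `g` has no fixed point, its orbits are unbounded in both directions, so the translates of
the fundamental domain by powers of `g` cover ℝ and both properties hold globally. Finally
`g = F ∘ Fⁿ⁻¹` forces `F` to be surjective, and a surjective monotone map is continuous.
-/

/-- `compSeq f k = f k ∘ ⋯ ∘ f 1`. -/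
def compSeq (f : ℕ → ℝ → ℝ) : ℕ → ℝ → ℝ
  | 0 => id
  | k + 1 => f (k + 1) ∘ compSeq f k

open Set Function

section LinearOrder

variable {α β : Type*} [LinearOrder α]

theorem strictMonoOn_Icc_of_Icc_succ [Preorder β] {f : α → β} {p : ℕ → α} {m : ℕ}
    (hp : ∀ i < m, p i ≤ p (i + 1)) (hf : ∀ i < m, StrictMonoOn f (Icc (p i) (p (i + 1)))) :
    StrictMonoOn f (Icc (p 0) (p m)) := by
  suffices p 0 ≤ p m ∧ StrictMonoOn f (Icc (p 0) (p m)) from this.2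
  induction m with
  | zero => simp
  | succ m ih =>
    obtain ⟨h0m, hmono⟩ := ih (fun i hi => hp i (by omega)) (fun i hi => hf i (by omega))
    have hm := hp m m.lt_add_one
    refine ⟨h0m.trans hm, ?_⟩
    rw [← Icc_union_Icc_eq_Icc h0m hm]
    exact hmono.union (hf m m.lt_add_one) (isGreatest_Icc h0m) (isLeast_Icc hm)

theorem strictMono_of_Icc_succ [Preorder β] {f : α → β} {u : ℤ → α} (hu : Monotone u)
    (hcover : ∀ x, ∃ k, x ∈ Icc (u k) (u (k + 1)))
    (hf : ∀ k, StrictMonoOn f (Icc (u k) (u (k + 1)))) : StrictMono f := by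
  intro x y hxy
  obtain ⟨k, hx⟩ := hcover x
  obtain ⟨l, hy⟩ := hcover y
  obtain ⟨m, rfl⟩ : ∃ m : ℕ, l = k + m := by
    refine Int.exists_add_of_le (not_lt.1 fun hlk => ?_)
    exact (hy.2.trans ((hu (by omega : l + 1 ≤ k)).trans hx.1)).not_gt hxy
  have hmono := strictMonoOn_Icc_of_Icc_succ (p := fun i : ℕ => u (k + i)) (m := m + 1)
    (fun i _ => hu (by omega)) (fun i _ => by simpa [add_assoc] using hf (k + i))
  refine hmono ⟨by simpa using hx.1, hx.2.trans (hu (by omega))⟩ ⟨?_, ?_⟩ hxy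
  · exact (hu (by omega)).trans hy.1
  · simpa [add_assoc] using hy.2

theorem eqOn_Icc_of_Icc_succ {f g : α → β} {p : ℕ → α} {m : ℕ} (hm : 0 < m)
    (h : ∀ i < m, EqOn f g (Icc (p i) (p (i + 1)))) : EqOn f g (Icc (p 0) (p m)) := by
  induction m with
  | zero => omega
  | succ m ih =>
    rcases m.eq_zero_or_pos with rfl | hm
    · exact h 0 one_pos
    · exact ((ih hm fun i hi => h i (by omega)).union (h m m.lt_add_one)).mono
        Icc_subset_Icc_union_Icc

theorem Monotone.exists_mem_Ico {u : ℤ → α} (hu : Monotone u)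
    (hbddAbove : ¬BddAbove (range u)) (hbddBelow : ¬BddBelow (range u)) (x : α) :
    ∃ k, x ∈ Ico (u k) (u (k + 1)) := by
  obtain ⟨_, ⟨m, rfl⟩, hm⟩ := not_bddAbove_iff.1 hbddAbove x
  obtain ⟨_, ⟨l, rfl⟩, hl⟩ := not_bddBelow_iff.1 hbddBelow x
  obtain ⟨k, hk, hmax⟩ := Int.exists_greatest_of_bdd (P := fun k => u k ≤ x)
    ⟨m, fun k hk => (hu.reflect_lt (hk.trans_lt hm)).le⟩ ⟨l, hl.le⟩
  exact ⟨k, hk, not_le.1 fun h => (hmax _ h).not_gt (lt_add_one k)⟩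

theorem StrictMonoOn.image_of_commute {F φ : α → α} {s : Set α}
    (hF : StrictMonoOn F s) (hφ : StrictMono φ) (hc : Function.Commute F φ) :
    StrictMonoOn F (φ '' s) := by
  rintro _ ⟨x, hx, rfl⟩ _ ⟨y, hy, rfl⟩ hxy
  rw [hc.eq, hc.eq]
  exact hφ (hF hx hy (hφ.lt_iff_lt.1 hxy))

end LinearOrder

section Commute

variable {α : Type*}

theorem Set.EqOn.image_of_commute {h₁ h₂ φ : α → α} {s : Set α} (hs : EqOn h₁ h₂ s)
    (h₁φ : Function.Commute h₁ φ) (h₂φ : Function.Commute h₂ φ) :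
    EqOn h₁ h₂ (φ '' s) := by
  rintro _ ⟨x, hx, rfl⟩
  rw [h₁φ.eq, h₂φ.eq, hs hx]

theorem Function.Commute.perm_zpow_right {F : α → α} {g : Equiv.Perm α}
    (hc : Function.Commute F g) (k : ℤ) : Function.Commute F ⇑(g ^ k) := by
  have hinv : Function.Commute F ⇑g⁻¹ :=
    hc.inverses_right g.apply_symm_apply g.symm_apply_apply
  induction k using Int.induction_on with
  | zero => rw [zpow_zero, Equiv.Perm.coe_one]; exact Function.Commute.id_right
  | succ k ih => rw [zpow_add_one, Equiv.Perm.coe_mul]; exact ih.comp_right hc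
  | pred k ih => rw [zpow_sub_one, Equiv.Perm.coe_mul]; exact ih.comp_right hinv

end Commute

theorem not_bddAbove_range_iterate {α : Type*} [ConditionallyCompleteLinearOrder α]
    [TopologicalSpace α] [OrderTopology α] {g : α → α} (hg : Continuous g)
    (hlt : ∀ x, x < g x) (b : α) : ¬BddAbove (range fun m : ℕ => g^[m] b) := by
  intro hbdd
  have hmono : Monotone fun m : ℕ => g^[m] b :=
    monotone_nat_of_le_succ fun m => by rw [iterate_succ_apply']; exact (hlt _).le
  exact (hlt _).ne'
    (isFixedPt_of_tendsto_iterate (tendsto_atTop_ciSup hmono hbdd) hg.continuousAt)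

namespace Equiv.Perm

section LinearOrder

variable {α : Type*} [LinearOrder α] {g : Perm α}

theorem strictMono_zpow (hg : StrictMono g) (k : ℤ) : StrictMono ⇑(g ^ k) := by
  have hinv : StrictMono ⇑g⁻¹ := fun a b hab => by
    rw [← hg.lt_iff_lt]; simpa using hab
  induction k using Int.induction_on with
  | zero => exact strictMono_id
  | succ k ih => rw [zpow_add_one, coe_mul]; exact ih.comp hg
  | pred k ih => rw [zpow_sub_one, coe_mul]; exact ih.comp hinv

theorem image_zpow_Icc (hg : StrictMono g) (k : ℤ) (b : α) :
    ⇑(g ^ k) '' Icc b (g b) = Icc ((g ^ k) b) ((g ^ (k + 1)) b) := by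
  rw [zpow_add_one, coe_mul, comp_apply]
  exact ((strictMono_zpow hg k).orderIsoOfSurjective _ (g ^ k).surjective).image_Icc b (g b)

theorem strictMono_zpow_apply (hg : StrictMono g) (hlt : ∀ x, x < g x) (b : α) :
    StrictMono fun k : ℤ => (g ^ k) b :=
  strictMono_int_of_lt_succ fun k => by
    simp only [zpow_add_one, coe_mul, comp_apply]
    exact strictMono_zpow hg k (hlt b)

end LinearOrder

variable {α : Type*} [ConditionallyCompleteLinearOrder α] [TopologicalSpace α] [OrderTopology α]
  [DenselyOrdered α] {g : Perm α}

theorem exists_zpow_mem_Icc (hg : StrictMono g) (hlt : ∀ x, x < g x) (b x : α) :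
    ∃ k : ℤ, x ∈ Icc ((g ^ k) b) ((g ^ (k + 1)) b) := by
  have hcont : Continuous g := hg.monotone.continuous_of_surjective g.surjective
  have hbddAbove : ¬BddAbove (range fun k : ℤ => (g ^ k) b) := by
    refine fun h => not_bddAbove_range_iterate hcont hlt b (h.mono ?_)
    rintro _ ⟨m, rfl⟩
    exact ⟨m, by simp only [zpow_natCast, iterate_eq_pow]⟩
  have hbddBelow : ¬BddBelow (range fun k : ℤ => (g ^ k) b) := by
    rintro ⟨c, hc⟩
    refine not_bddAbove_range_iterate hcont hlt c ⟨b, ?_⟩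
    rintro _ ⟨m, rfl⟩
    have := (strictMono_zpow hg m).monotone (hc ⟨-m, rfl⟩ : c ≤ (g ^ (-m : ℤ)) b)
    rwa [← mul_apply, ← zpow_add, add_neg_cancel, zpow_zero, one_apply, zpow_natCast,
      ← iterate_eq_pow] at this
  obtain ⟨k, hk⟩ :=
    (strictMono_zpow_apply hg hlt b).monotone.exists_mem_Ico hbddAbove hbddBelow x
  exact ⟨k, Ico_subset_Icc_self hk⟩

theorem commute_of_eq_zpow_conj (hg : StrictMono g) (hlt : ∀ x, x < g x) {F : α → α} {b : α}
    (hF : ∀ k : ℤ, ∀ x ∈ Icc ((g ^ k) b) ((g ^ (k + 1)) b),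
      F x = (g ^ k) (F ((g ^ (-k)) x))) :
    Function.Commute F g := by
  intro x
  obtain ⟨k, hx⟩ := exists_zpow_mem_Icc hg hlt b x
  have hgx : g x ∈ Icc ((g ^ (k + 1)) b) ((g ^ (k + 1 + 1)) b) := by
    simpa only [← image_zpow_Icc hg, ← image_comp, ← coe_mul, ← zpow_one_add, add_comm 1 k]
      using mem_image_of_mem g hx
  have hshift : (g ^ (-(k + 1))) (g x) = (g ^ (-k)) x := by
    rw [← mul_apply, ← zpow_add_one, neg_add, neg_add_cancel_right]
  rw [hF (k + 1) _ hgx, hshift, hF k x hx, add_comm, zpow_one_add, mul_apply]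

theorem strictMono_of_strictMonoOn_Icc (hg : StrictMono g) (hlt : ∀ x, x < g x) {F : α → α}
    (hc : Function.Commute F g) (b : α) (hF : StrictMonoOn F (Icc b (g b))) : StrictMono F :=
  strictMono_of_Icc_succ (strictMono_zpow_apply hg hlt b).monotone (exists_zpow_mem_Icc hg hlt b)
    fun k => image_zpow_Icc hg k b ▸
      hF.image_of_commute (strictMono_zpow hg k) (hc.perm_zpow_right k)

theorem eq_of_eqOn_Icc (hg : StrictMono g) (hlt : ∀ x, x < g x) {h₁ h₂ : α → α}
    (hc₁ : Function.Commute h₁ g) (hc₂ : Function.Commute h₂ g) (b : α)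
    (hD : EqOn h₁ h₂ (Icc b (g b))) : h₁ = h₂ := by
  funext x
  obtain ⟨k, hk⟩ := exists_zpow_mem_Icc hg hlt b x
  rw [← image_zpow_Icc hg k b] at hk
  exact hD.image_of_commute (hc₁.perm_zpow_right k) (hc₂.perm_zpow_right k) hk

end Equiv.Perm

namespace PiecewiseRoot

variable {n : ℕ} {p : ℕ → ℝ} {f : ℕ → ℝ → ℝ} {F : ℝ → ℝ}

theorem eqOn_piece
    (hFi : ∀ i : ℕ, 1 ≤ i → i ≤ n → ∀ x ∈ Icc (p (i - 1)) (p i), F x = f i x)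
    {i : ℕ} (hi : i < n) : EqOn F (f (i + 1)) (Icc (p i) (p (i + 1))) :=
  fun x hx => hFi (i + 1) (by omega) hi x (by simpa using hx)

theorem strictMonoOn_piece
    (hFi : ∀ i : ℕ, 1 ≤ i → i ≤ n → ∀ x ∈ Icc (p (i - 1)) (p i), F x = f i x)
    (hfmono : ∀ i : ℕ, 1 ≤ i → i < n → StrictMonoOn (f i) (Icc (p (i - 1)) (p i)))
    (hfnmono : StrictMonoOn (f n) (Icc (p (n - 1)) (p n))) {i : ℕ} (hi : i < n) :
    StrictMonoOn F (Icc (p i) (p (i + 1))) := by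
  refine StrictMonoOn.congr ?_ (eqOn_piece hFi hi).symm
  rcases (Nat.succ_le_of_lt hi).lt_or_eq with h | rfl
  · simpa using hfmono (i + 1) (by omega) h
  · simpa using hfnmono

theorem image_piece
    (hFi : ∀ i : ℕ, 1 ≤ i → i ≤ n → ∀ x ∈ Icc (p (i - 1)) (p i), F x = f i x)
    (hfim : ∀ i : ℕ, 1 ≤ i → i < n →
      f i '' Icc (p (i - 1)) (p i) = Icc (p i) (p (i + 1)))
    {i : ℕ} (hi : i + 1 < n) :
    F '' Icc (p i) (p (i + 1)) = Icc (p (i + 1)) (p (i + 1 + 1)) := by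
  rw [(eqOn_piece hFi (by omega : i < n)).image_eq]
  simpa using hfim (i + 1) (by omega) hi

theorem mapsTo_compSeq
    (hfim : ∀ i : ℕ, 1 ≤ i → i < n →
      f i '' Icc (p (i - 1)) (p i) = Icc (p i) (p (i + 1))) :
    ∀ i < n, MapsTo (compSeq f i) (Icc (p 0) (p 1)) (Icc (p i) (p (i + 1)))
  | 0, _ => mapsTo_id _
  | i + 1, hi => by
    have hf : MapsTo (f (i + 1)) (Icc (p i) (p (i + 1))) (Icc (p (i + 1)) (p (i + 1 + 1))) := by
      simpa using hfim (i + 1) (by omega) hi ▸ mapsTo_image (f (i + 1)) _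
    exact hf.comp (mapsTo_compSeq hfim i (by omega))

theorem iterate_eqOn_compSeq
    (hFi : ∀ i : ℕ, 1 ≤ i → i ≤ n → ∀ x ∈ Icc (p (i - 1)) (p i), F x = f i x)
    (hfim : ∀ i : ℕ, 1 ≤ i → i < n →
      f i '' Icc (p (i - 1)) (p i) = Icc (p i) (p (i + 1))) :
    ∀ i ≤ n, EqOn F^[i] (compSeq f i) (Icc (p 0) (p 1))
  | 0, _ => fun _ _ => rfl
  | i + 1, hi => fun x hx => by
    rw [iterate_succ_apply', iterate_eqOn_compSeq hFi hfim i (by omega) hx]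
    exact eqOn_piece hFi hi (mapsTo_compSeq hfim i hi hx)

theorem iterate_eqOn_piece
    (hFi : ∀ i : ℕ, 1 ≤ i → i ≤ n → ∀ x ∈ Icc (p (i - 1)) (p i), F x = f i x)
    (hfim : ∀ i : ℕ, 1 ≤ i → i < n →
      f i '' Icc (p (i - 1)) (p i) = Icc (p i) (p (i + 1)))
    {g : ℝ → ℝ} (hc : Function.Commute F g)
    (hfn : ∀ x ∈ Icc (p 0) (p 1), compSeq f n x = g x) :
    ∀ i < n, EqOn F^[n] g (Icc (p i) (p (i + 1)))
  | 0, _ => fun x hx => (iterate_eqOn_compSeq hFi hfim n le_rfl hx).trans (hfn x hx)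
  | i + 1, hi => image_piece hFi hfim hi ▸
      (iterate_eqOn_piece hFi hfim hc hfn i (by omega)).image_of_commute
        (Function.Commute.iterate_self F n) hc.symm

end PiecewiseRoot

theorem piecewise_nth_root_general (g : Equiv.Perm ℝ)
    (hg : StrictMono g) (hfix : ∀ x : ℝ, g x > x)
    (n : ℕ) (hn : 2 ≤ n)
    (p : ℕ → ℝ) (hp0 : p 0 = 0) (hpn : p n = g 0)
    (hpmono : ∀ i : ℕ, i < n → p i < p (i + 1))
    (f : ℕ → ℝ → ℝ)
    (hfi : ∀ i : ℕ, 1 ≤ i → i < n →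
      StrictMonoOn (f i) (Set.Icc (p (i - 1)) (p i)) ∧
      f i '' Set.Icc (p (i - 1)) (p i) = Set.Icc (p i) (p (i + 1)))
    (hfn : ∀ x ∈ Set.Icc (p 0) (p 1), compSeq f n x = g x)
    (hfnmono : StrictMonoOn (f n) (Set.Icc (p (n - 1)) (p n)))
    (F : ℝ → ℝ)
    (hFi : ∀ i : ℕ, 1 ≤ i → i ≤ n → ∀ x ∈ Set.Icc (p (i - 1)) (p i), F x = f i x)
    (hFk : ∀ k : ℤ, k ≠ 0 → ∀ x ∈ Set.Icc ((g ^ k) 0) ((g ^ (k + 1)) 0),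
      F x = (g ^ k) (F ((g ^ (-k)) x))) :
    StrictMono F ∧ Function.Bijective F ∧ Continuous F ∧ F^[n] = ⇑g := by
  have hconj : ∀ k : ℤ, ∀ x ∈ Icc ((g ^ k) 0) ((g ^ (k + 1)) 0),
      F x = (g ^ k) (F ((g ^ (-k)) x)) := by
    intro k
    rcases eq_or_ne k 0 with rfl | hk
    · simp
    · exact hFk k hk
  have hc : Function.Commute F g := Equiv.Perm.commute_of_eq_zpow_conj hg hfix hconj
  have hD : Icc (p 0) (p n) = Icc 0 (g 0) := by rw [hp0, hpn]
  have hmono : StrictMono F := by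
    refine Equiv.Perm.strictMono_of_strictMonoOn_Icc hg hfix hc 0 (hD ▸ ?_)
    exact strictMonoOn_Icc_of_Icc_succ (fun i hi => (hpmono i hi).le) fun _ =>
      PiecewiseRoot.strictMonoOn_piece hFi (fun i h₁ h₂ => (hfi i h₁ h₂).1) hfnmono
  have hpow : F^[n] = g := by
    refine Equiv.Perm.eq_of_eqOn_Icc hg hfix (hc.iterate_left n) (Function.Commute.refl g) 0
      (hD ▸ ?_)
    exact eqOn_Icc_of_Icc_succ (by omega)
      (PiecewiseRoot.iterate_eqOn_piece hFi (fun i h₁ h₂ => (hfi i h₁ h₂).2) hc hfn)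
  have hsurj : Surjective F := by
    have hcomp : F ∘ F^[n - 1] = g := by
      rw [← iterate_succ', Nat.succ_eq_add_one, Nat.sub_add_cancel (by omega), hpow]
    exact Surjective.of_comp (hcomp ▸ g.surjective)
  exact ⟨hmono, ⟨hmono.injective, hsurj⟩, hmono.monotone.continuous_of_surjective hsurj,
    hpow⟩

/-- Piecewise construction of an n-th root of a fixed-point-free orientation-preserving
homeomorphism `g` of ℝ with `g 0 > 0`.  Given dyadic-free data: points
`0 = p 0 < p 1 < ⋯ < p n = g 0`, increasing homeomorphisms
`f i : [p (i-1), p i] → [p i, p (i+1)]` for `1 ≤ i < n`, and `f n` chosen so that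
`f n ∘ ⋯ ∘ f 1 = g` on `[p 0, p 1]`, any function `F` agreeing with `f i` on
`[p (i-1), p i]` and with `gᵏ F g⁻ᵏ` on `[gᵏ 0, gᵏ⁺¹ 0]` for `k ≠ 0` is a
homeomorphism of ℝ with `Fⁿ = g`. -/
theorem piecewise_nth_root (g : Equiv.Perm ℝ)
    (hg : StrictMono g) (hfix : ∀ x : ℝ, g x > x)
    (n : ℕ) (hn : 2 ≤ n)
    (p : ℕ → ℝ) (hp0 : p 0 = 0) (hpn : p n = g 0)
    (hpmono : ∀ i : ℕ, i < n → p i < p (i + 1))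
    (f : ℕ → ℝ → ℝ)
    (hfi : ∀ i : ℕ, 1 ≤ i → i < n →
      StrictMonoOn (f i) (Set.Icc (p (i - 1)) (p i)) ∧
      f i '' Set.Icc (p (i - 1)) (p i) = Set.Icc (p i) (p (i + 1)))
    (hfn : ∀ x ∈ Set.Icc (p 0) (p 1), compSeq f n x = g x)
    (hfnmono : StrictMonoOn (f n) (Set.Icc (p (n - 1)) (p n)))
    (hfnim : f n '' Set.Icc (p (n - 1)) (p n) = Set.Icc (p n) (g (p 1)))
    (F : ℝ → ℝ)
    (hFi : ∀ i : ℕ, 1 ≤ i → i ≤ n → ∀ x ∈ Set.Icc (p (i - 1)) (p i), F x = f i x)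
    (hFk : ∀ k : ℤ, k ≠ 0 → ∀ x ∈ Set.Icc ((g ^ k) 0) ((g ^ (k + 1)) 0),
      F x = (g ^ k) (F ((g ^ (-k)) x))) :
    StrictMono F ∧ Function.Bijective F ∧ Continuous F ∧ F^[n] = ⇑g :=
  piecewise_nth_root_general g hg hfix n hn p hp0 hpn hpmono f hfi hfn hfnmono F hFi hFk
end

section
/- Every orientation-preserving homeomorphism g of ℝ satisfying g(x) > x for all x admits an n-th root for every n ≥ 2: there exists an orientation-preserving homeomorphism f of ℝ with fⁿ = g. -/
/-!
Write `G` for `g` as an order automorphism of `ℝ`. Since `G x > x` everywhere, every orbit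
`k ↦ Gᵏ 0` (`k : ℤ`) is strictly increasing and unbounded in both directions, so the intervals
`[Gᵏ 0, Gᵏ⁺¹ 0)` tile `ℝ`. Sending `[k, k + 1)` affinely onto `[0, G 0)` and then by `Gᵏ` onto
`[Gᵏ 0, Gᵏ⁺¹ 0)` gives an order automorphism `ψ` of `ℝ` with `ψ (t + 1) = G (ψ t)`, i.e. `G` is
conjugate to translation by `1`. Conjugating translation by `1 / n` back through `ψ` gives the root.
-/

open Function

namespace OrderIso

variable {α : Type*}

section Preorder

variable [Preorder α] {G : α ≃o α}

lemma zpow_add_one_apply (k : ℤ) (x : α) : (G ^ (k + 1)) x = (G ^ k) (G x) := by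
  rw [zpow_add_one, RelIso.mul_apply]

lemma zpow_add_one_apply' (k : ℤ) (x : α) : (G ^ (k + 1)) x = G ((G ^ k) x) := by
  rw [← RelIso.mul_apply, ← zpow_one_add, add_comm]

lemma strictMono_zpow_apply (hG : ∀ x, x < G x) (x : α) : StrictMono fun k : ℤ ↦ (G ^ k) x :=
  strictMono_int_of_lt_succ fun k ↦ by
    simpa only [zpow_add_one_apply] using (G ^ k).strictMono (hG x)

end Preorder

section ConditionallyCompleteLinearOrder

variable [ConditionallyCompleteLinearOrder α] {G : α ≃o α}

lemma exists_lt_zpow_apply (hG : ∀ x, x < G x) (x y : α) : ∃ k : ℤ, y < (G ^ k) x := by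
  by_contra! hbdd
  set L := ⨆ k : ℤ, (G ^ k) x
  have hL : ∀ k : ℤ, (G ^ k) x ≤ L := le_ciSup ⟨y, Set.forall_mem_range.2 hbdd⟩
  -- some orbit point exceeds `G⁻¹ L < L`, so the next one exceeds `L`
  obtain ⟨k, hk⟩ := exists_lt_of_lt_ciSup (by simpa using hG (G.symm L) : G.symm L < L)
  have := hL (k + 1)
  rw [zpow_add_one_apply', ← G.le_symm_apply] at this
  exact lt_irrefl _ (this.trans_lt hk)

lemma exists_zpow_apply_lt (hG : ∀ x, x < G x) (x y : α) : ∃ k : ℤ, (G ^ k) x < y := by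
  obtain ⟨k, hk⟩ := exists_lt_zpow_apply hG y x
  refine ⟨-k, ?_⟩
  simpa [zpow_neg, ← RelIso.mul_apply] using (G ^ (-k)).strictMono hk

lemma exists_zpow_apply_le_lt (hG : ∀ x, x < G x) (x y : α) :
    ∃ k : ℤ, (G ^ k) x ≤ y ∧ y < (G ^ (k + 1)) x := by
  have hmono := strictMono_zpow_apply hG x
  obtain ⟨K, hK⟩ := exists_lt_zpow_apply hG x y
  obtain ⟨k₀, hk₀⟩ := exists_zpow_apply_lt hG x y
  obtain ⟨k, hk, hmax⟩ := Int.exists_greatest_of_bdd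
    ⟨K, fun z hz ↦ (hmono.lt_iff_lt.1 (lt_of_le_of_lt hz hK)).le⟩ ⟨k₀, hk₀.le⟩
  exact ⟨k, hk, not_le.1 fun h ↦ (lt_add_one k).not_ge (hmax _ h)⟩

end ConditionallyCompleteLinearOrder

section Real

variable {G : ℝ ≃o ℝ}

noncomputable def translationConj (G : ℝ ≃o ℝ) (t : ℝ) : ℝ := (G ^ ⌊t⌋) (Int.fract t * G 0)

lemma translationConj_intCast_add (G : ℝ ≃o ℝ) (k : ℤ) {s : ℝ} (hs : s ∈ Set.Ico (0 : ℝ) 1) :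
    translationConj G (k + s) = (G ^ k) (s * G 0) := by
  rw [translationConj, Int.floor_intCast_add, Int.floor_eq_zero_iff.2 hs, add_zero,
    Int.fract_intCast_add, Int.fract_eq_self.2 hs]

lemma translationConj_add_one (G : ℝ ≃o ℝ) (t : ℝ) :
    translationConj G (t + 1) = G (translationConj G t) := by
  rw [translationConj, translationConj, Int.floor_add_one, Int.fract_add_one, zpow_add_one_apply']

lemma translationConj_mem_Ico (hG : ∀ x, x < G x) (t : ℝ) :
    translationConj G t ∈ Set.Ico ((G ^ ⌊t⌋) 0) ((G ^ (⌊t⌋ + 1)) 0) := by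
  have hG0 : 0 < G 0 := hG 0
  rw [zpow_add_one_apply]
  exact ⟨(G ^ ⌊t⌋).monotone (mul_nonneg (Int.fract_nonneg t) hG0.le),
    (G ^ ⌊t⌋).strictMono (mul_lt_of_lt_one_left hG0 (Int.fract_lt_one t))⟩

lemma strictMono_translationConj (hG : ∀ x, x < G x) : StrictMono (translationConj G) := by
  intro s t hst
  rcases (Int.floor_mono hst.le).eq_or_lt with hfl | hfl
  · have hfract : Int.fract s < Int.fract t := by
      rw [Int.fract, Int.fract, hfl]
      exact sub_lt_sub_right hst _
    rw [translationConj, translationConj, hfl]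
    exact (G ^ ⌊t⌋).strictMono (mul_lt_mul_of_pos_right hfract (hG 0))
  · calc translationConj G s < (G ^ (⌊s⌋ + 1)) 0 := (translationConj_mem_Ico hG s).2
      _ ≤ (G ^ ⌊t⌋) 0 := (strictMono_zpow_apply hG 0).monotone hfl
      _ ≤ translationConj G t := (translationConj_mem_Ico hG t).1

lemma surjective_translationConj (hG : ∀ x, x < G x) : Surjective (translationConj G) := by
  intro y
  have hG0 : 0 < G 0 := hG 0
  obtain ⟨k, hk, hk'⟩ := exists_zpow_apply_le_lt hG 0 y
  rw [zpow_add_one_apply] at hk'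
  set z := (G ^ k).symm y with hz
  have hz0 : 0 ≤ z := (G ^ k).le_symm_apply.2 hk
  have hzG : z < G 0 := (G ^ k).symm_apply_lt.2 hk'
  refine ⟨k + z / G 0, ?_⟩
  rw [translationConj_intCast_add G k ⟨div_nonneg hz0 hG0.le, (div_lt_one hG0).2 hzG⟩,
    div_mul_cancel₀ z hG0.ne', hz, apply_symm_apply]

lemma exists_semiconj_add_one (hG : ∀ x, x < G x) : ∃ ψ : ℝ ≃o ℝ, Semiconj ψ (· + 1) G :=
  ⟨(strictMono_translationConj hG).orderIsoOfSurjective _ (surjective_translationConj hG),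
    translationConj_add_one G⟩

lemma exists_iterate_eq_of_semiconj_add_one [Preorder α] {g : α → α} (ψ : ℝ ≃o α)
    (hψ : Semiconj ψ (· + 1) g) {n : ℕ} (hn : n ≠ 0) : ∃ f : α ≃o α, (⇑f)^[n] = g := by
  let f := ψ.symm.trans ((OrderIso.addRight (n : ℝ)⁻¹).trans ψ)
  have hf : Semiconj ψ (· + (n : ℝ)⁻¹) f := fun t ↦ by simp [f]
  refine ⟨f, funext fun y ↦ ?_⟩
  obtain ⟨t, rfl⟩ := ψ.surjective y
  have := hf.iterate_right n t
  rw [add_right_iterate_apply, nsmul_eq_mul, mul_inv_cancel₀ (Nat.cast_ne_zero.2 hn)] at this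
  rw [← this, hψ]

end Real

end OrderIso

/-- Every fixed-point-free orientation-preserving homeomorphism of ℝ (moving points to
the right) admits an n-th root for every n ≥ 2. -/
theorem exists_nth_root_of_fixedPointFree (g : ℝ → ℝ)
    (hg : StrictMono g) (hgb : Function.Bijective g)
    (hfix : ∀ x : ℝ, g x > x) (n : ℕ) (hn : 2 ≤ n) :
    ∃ f : ℝ → ℝ, StrictMono f ∧ Function.Bijective f ∧ f^[n] = g := by
  let G := hg.orderIsoOfSurjective g hgb.surjective
  obtain ⟨ψ, hψ⟩ := OrderIso.exists_semiconj_add_one (G := G) hfix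
  obtain ⟨f, hf⟩ := OrderIso.exists_iterate_eq_of_semiconj_add_one ψ hψ (by omega : n ≠ 0)
  exact ⟨f, f.strictMono, f.bijective, hf⟩
end

section
/- Let G be a group containing a central element z of infinite order such that for every g ∈ G with gᵐ = z for some m ≥ 1 and every n ≥ 2, there exists f ∈ G with fⁿ = g (and then fᵐⁿ = z). Then G contains a subgroup isomorphic to ℚ containing z. -/
/-!
Repeatedly extracting roots gives a tower `t` with `t 0 = z` and `t (n + 1) ^ (n + 1) = t n`,
so `t N` is an `N !`-th root of `z`. For `q.den ≤ N` the number `q * N !` is an integer, and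
`q ↦ t N ^ (q * N !)` does not depend on such `N`; taking `N` large enough for two rationals at
once shows it is additive. It is injective because `z`, a power of every `t N`, has infinite order.
-/

theorem exists_root_tower {G : Type*} [Monoid G] {S : Set G} {z : G} (hz : z ∈ S)
    (hS : ∀ g ∈ S, ∀ n : ℕ, ∃ f ∈ S, f ^ (n + 1) = g) :
    ∃ t : ℕ → G, t 0 = z ∧ ∀ n, t (n + 1) ^ (n + 1) = t n := by
  choose! r hrS hr using hS
  let t : ℕ → G := fun n => Nat.rec z (fun k g => r g k) n
  have ht : ∀ n, t n ∈ S := fun n => by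
    induction n with
    | zero => exact hz
    | succ n ih => exact hrS _ ih n
  exact ⟨t, rfl, fun n => hr _ (ht n) n⟩

section RootTower

open Nat

/-- The integer `q * N !`, provided `q.den ≤ N`. -/
def factorialScale (N : ℕ) (q : ℚ) : ℤ := q.num * (N ! / q.den : ℕ)

theorem factorialScale_cast {N : ℕ} {q : ℚ} (h : q.den ≤ N) :
    (factorialScale N q : ℚ) = q * N ! := by
  have hdvd : q.den ∣ N ! := Nat.dvd_factorial q.pos h
  rw [factorialScale, Int.cast_mul, Int.cast_natCast, Nat.cast_div hdvd (by positivity),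
    ← Rat.mul_den_eq_num]
  field_simp

theorem factorialScale_mul_factorial_div {N M : ℕ} {q : ℚ} (hq : q.den ≤ N) (hNM : N ≤ M) :
    factorialScale N q * (M ! / N ! : ℕ) = factorialScale M q := by
  have hdvd : N ! ∣ M ! := Nat.factorial_dvd_factorial hNM
  apply Int.cast_injective (α := ℚ)
  rw [Int.cast_mul, factorialScale_cast hq, factorialScale_cast (hq.trans hNM), Int.cast_natCast,
    Nat.cast_div hdvd (by positivity)]
  field_simp

variable {G : Type*} [Group G] {t : ℕ → G}

theorem pow_factorial_div_factorial (ht : ∀ n, t (n + 1) ^ (n + 1) = t n) {N M : ℕ}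
    (h : N ≤ M) : t M ^ (M ! / N !) = t N := by
  induction M, h using Nat.le_induction with
  | base => rw [Nat.div_self (Nat.factorial_pos N), pow_one]
  | succ M hNM ih =>
    rw [Nat.factorial_succ, Nat.mul_div_assoc _ (Nat.factorial_dvd_factorial hNM), pow_mul, ht,
      ih]

variable (t) in
/-- The image of `q : ℚ` in the union of the cyclic groups `⟨t N⟩`, where `t N` stands for
`1 / N !`. -/
noncomputable def towerRat (q : ℚ) : G := t q.den ^ factorialScale q.den q

theorem towerRat_eq (ht : ∀ n, t (n + 1) ^ (n + 1) = t n) {N : ℕ} {q : ℚ} (h : q.den ≤ N) :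
    towerRat t q = t N ^ factorialScale N q := by
  rw [towerRat, ← factorialScale_mul_factorial_div le_rfl h, mul_comm, zpow_mul, zpow_natCast,
    pow_factorial_div_factorial ht h]

theorem towerRat_add (ht : ∀ n, t (n + 1) ^ (n + 1) = t n) (q r : ℚ) :
    towerRat t (q + r) = towerRat t q * towerRat t r := by
  set N := max (q + r).den (max q.den r.den)
  have hqr : (q + r).den ≤ N := le_max_left _ _
  have hq : q.den ≤ N := (le_max_left _ _).trans (le_max_right _ _)
  have hr : r.den ≤ N := (le_max_right _ _).trans (le_max_right _ _)
  rw [towerRat_eq ht hqr, towerRat_eq ht hq, towerRat_eq ht hr, ← zpow_add]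
  congr 1
  apply Int.cast_injective (α := ℚ)
  rw [Int.cast_add, factorialScale_cast hqr, factorialScale_cast hq, factorialScale_cast hr]
  ring

theorem eq_zero_of_towerRat_eq_one (ht : ∀ n, t (n + 1) ^ (n + 1) = t n) (ht₀ : ¬ IsOfFinOrder (t 0))
    {q : ℚ} (hq : towerRat t q = 1) : q = 0 := by
  have hfree : ¬ IsOfFinOrder (t q.den) := fun hfin => by
    apply ht₀
    simpa using (pow_factorial_div_factorial ht (Nat.zero_le q.den)) ▸ hfin.pow
  have hscale : factorialScale q.den q = 0 := by
    by_contra hne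
    exact hfree (isOfFinOrder_iff_zpow_eq_one.mpr ⟨_, hne, hq⟩)
  have := factorialScale_cast (N := q.den) (q := q) le_rfl
  rw [hscale, Int.cast_zero] at this
  simpa [Nat.factorial_ne_zero] using this.symm

variable (t) in
noncomputable def towerHom (ht : ∀ n, t (n + 1) ^ (n + 1) = t n) : Multiplicative ℚ →* G :=
  MonoidHom.mk' (fun q => towerRat t q.toAdd) fun q r => towerRat_add ht q.toAdd r.toAdd

theorem towerHom_injective (ht : ∀ n, t (n + 1) ^ (n + 1) = t n) (ht₀ : ¬ IsOfFinOrder (t 0)) :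
    Function.Injective (towerHom t ht) :=
  (injective_iff_map_eq_one _).mpr fun _ hq => eq_zero_of_towerRat_eq_one ht ht₀ hq

theorem towerHom_one (ht : ∀ n, t (n + 1) ^ (n + 1) = t n) :
    towerHom t ht (Multiplicative.ofAdd 1) = t 0 := by
  change towerRat t 1 = t 0
  simp [towerRat, factorialScale, ← ht 0]

end RootTower

theorem contains_rat_of_root_extraction_general {G : Type*} [Group G]
    (z : G) (hord : ¬ IsOfFinOrder z)
    (hroots : ∀ g : G, ∀ m : ℕ, 1 ≤ m → g ^ m = z →
      ∀ n : ℕ, 2 ≤ n → ∃ f : G, f ^ n = g) :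
    ∃ φ : Multiplicative ℚ →* G, Function.Injective φ ∧
      φ (Multiplicative.ofAdd (1 : ℚ)) = z := by
  set S : Set G := {g | ∃ m, 1 ≤ m ∧ g ^ m = z}
  have hS : ∀ g ∈ S, ∀ n : ℕ, ∃ f ∈ S, f ^ (n + 1) = g := by
    rintro g ⟨m, hm, hgm⟩ (_ | n)
    · exact ⟨g, ⟨m, hm, hgm⟩, pow_one g⟩
    · obtain ⟨f, hf⟩ := hroots g m hm hgm (n + 2) (by omega)
      exact ⟨f, ⟨(n + 2) * m, Nat.mul_pos (by omega) hm, by rw [pow_mul, hf, hgm]⟩, hf⟩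
  obtain ⟨t, rfl, ht⟩ := exists_root_tower (S := S) ⟨1, le_rfl, pow_one z⟩ hS
  exact ⟨towerHom t ht, towerHom_injective ht hord, towerHom_one ht⟩

/-- If `z` is a central element of infinite order and every `g` with `gᵐ = z` (m ≥ 1)
admits n-th roots for all n ≥ 2, then `G` contains a subgroup isomorphic to ℚ
containing `z`: there is an embedding of ℚ sending `1` to `z`. -/
theorem contains_rat_of_root_extraction {G : Type*} [Group G]
    (z : G) (hz : z ∈ Subgroup.center G) (hord : ¬ IsOfFinOrder z)
    (hroots : ∀ g : G, ∀ m : ℕ, 1 ≤ m → g ^ m = z →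
      ∀ n : ℕ, 2 ≤ n → ∃ f : G, f ^ n = g) :
    ∃ φ : Multiplicative ℚ →* G, Function.Injective φ ∧
      φ (Multiplicative.ofAdd (1 : ℚ)) = z :=
  contains_rat_of_root_extraction_general z hord hroots
end

section
/- Let G be a group containing a central element z of infinite order such that for every g ∈ G with gᵐ = z for some m ≥ 1 and every n ≥ 2, there exist at least two distinct f ∈ G with fⁿ = g. Then G contains infinitely many (indeed continuum many, if infinitely many roots exist at each stage) distinct subgroups isomorphic to ℚ, all containing z. -/
open Cardinal Nat

namespace RatSubgroupAux

universe u

variable {G : Type u} [Group G]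

/-- A "setup" packaging a central-ish element `z` of infinite order together with a
function picking, for each element `g` that is a root of `z` and each level `n`,
two distinct `(n+2)`-th roots of `g`. -/
structure Setup (G : Type u) [Group G] : Type u where
  z : G
  hord : ¬ IsOfFinOrder z
  p : G → ℕ → Bool → G
  hp : ∀ g n, (∃ m, 1 ≤ m ∧ g ^ m = z) →
    (∀ b, (p g n b) ^ (n + 2) = g) ∧ p g n false ≠ p g n true

namespace Setup

variable (S : Setup G)

/-- The chain of roots along a branch `σ`. -/
def E (σ : ℕ → Bool) : ℕ → G
  | 0 => S.z
  | n + 1 => S.p (E σ n) n (σ n)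

lemma E_pow (σ : ℕ → Bool) : ∀ n, (S.E σ n) ^ (n + 1)! = S.z := by
  intro n
  induction n with
  | zero => simp [E]
  | succ n ih =>
    have hroot : ∃ m, 1 ≤ m ∧ (S.E σ n) ^ m = S.z :=
      ⟨(n + 1)!, Nat.one_le_iff_ne_zero.mpr (Nat.factorial_ne_zero _), ih⟩
    have hstep := (S.hp (S.E σ n) n hroot).1 (σ n)
    have hfac : (n + 1 + 1)! = (n + 2) * (n + 1)! := Nat.factorial_succ _
    show (S.p (S.E σ n) n (σ n)) ^ (n + 1 + 1)! = S.z
    rw [hfac, pow_mul, hstep, ih]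

lemma E_root (σ : ℕ → Bool) (n : ℕ) : ∃ m, 1 ≤ m ∧ (S.E σ n) ^ m = S.z :=
  ⟨(n + 1)!, Nat.one_le_iff_ne_zero.mpr (Nat.factorial_ne_zero _), S.E_pow σ n⟩

lemma E_step (σ : ℕ → Bool) (n : ℕ) : (S.E σ (n + 1)) ^ (n + 2) = S.E σ n :=
  (S.hp (S.E σ n) n (S.E_root σ n)).1 (σ n)

lemma E_ne (σ τ : ℕ → Bool) (n : ℕ) (h : S.E σ n = S.E τ n) (hb : σ n ≠ τ n) :
    S.E σ (n + 1) ≠ S.E τ (n + 1) := by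
  have h2 := (S.hp (S.E σ n) n (S.E_root σ n)).2
  show S.p (S.E σ n) n (σ n) ≠ S.p (S.E τ n) n (τ n)
  rw [← h]
  cases hσ : σ n <;> cases hτ : τ n
  · rw [hσ, hτ] at hb; exact absurd rfl hb
  · exact h2
  · exact fun he => h2 he.symm
  · rw [hσ, hτ] at hb; exact absurd rfl hb

lemma E_zpow_eq_zero (σ : ℕ → Bool) (n : ℕ) {k : ℤ} (hk : S.E σ n ^ k = 1) : k = 0 := by
  by_contra h
  have h1 : S.E σ n ^ (k.natAbs : ℤ) = 1 := by
    rcases Int.natAbs_eq k with he | he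
    · rw [← he, hk]
    · rw [he] at hk
      rwa [zpow_neg, inv_eq_one] at hk
  have h2 : S.E σ n ^ k.natAbs = 1 := by rwa [zpow_natCast] at h1
  have hfin : IsOfFinOrder (S.E σ n) :=
    isOfFinOrder_iff_pow_eq_one.mpr ⟨k.natAbs, Int.natAbs_pos.mpr h, h2⟩
  exact S.hord (S.E_pow σ n ▸ hfin.pow)

/-- The integer `q * (n+1)!`, when it is an integer. -/
noncomputable def inum (q : ℚ) (n : ℕ) : ℤ := (q * ((n + 1)! : ℕ)).num

/-- `q * (n+1)!` is an integer. -/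
def P (q : ℚ) (n : ℕ) : Prop := ∃ k : ℤ, (k : ℚ) = q * ((n + 1)! : ℕ)

lemma inum_cast {q : ℚ} {n : ℕ} (h : P q n) :
    ((inum q n : ℤ) : ℚ) = q * ((n + 1)! : ℕ) := by
  obtain ⟨k, hk⟩ := h
  rw [inum, ← hk]
  simp

lemma P_succ {q : ℚ} {n : ℕ} (h : P q n) : P q (n + 1) := by
  obtain ⟨k, hk⟩ := h
  refine ⟨k * (n + 2), ?_⟩
  have h2 : (((n + 1 + 1)! : ℕ) : ℚ) = ((n + 2 : ℕ) : ℚ) * (((n + 1)! : ℕ) : ℚ) := by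
    rw [Nat.factorial_succ]
    push_cast
    ring
  rw [h2]
  push_cast
  rw [← mul_assoc, mul_comm q, mul_assoc, ← hk]
  push_cast
  ring

lemma P_mono {q : ℚ} {n : ℕ} (h : P q n) : ∀ m, n ≤ m → P q m := by
  intro m hm
  induction m, hm using Nat.le_induction with
  | base => exact h
  | succ m _ ih => exact P_succ ih

/-- `E σ n` raised to the integer `q * (n+1)!`. -/
noncomputable def val (σ : ℕ → Bool) (q : ℚ) (n : ℕ) : G := S.E σ n ^ (inum q n)

lemma val_succ (σ : ℕ → Bool) {q : ℚ} {n : ℕ} (h : P q n) :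
    S.val σ q (n + 1) = S.val σ q n := by
  have h0 := inum_cast h
  have h1 := inum_cast (P_succ h)
  have hfq : (((n + 1 + 1)! : ℕ) : ℚ) = ((n + 2 : ℕ) : ℚ) * (((n + 1)! : ℕ) : ℚ) := by
    rw [Nat.factorial_succ]; push_cast; ring
  have hnum : inum q (n + 1) = ((n + 2 : ℕ) : ℤ) * inum q n := by
    have : ((inum q (n + 1) : ℤ) : ℚ) = ((((n + 2 : ℕ) : ℤ) * inum q n : ℤ) : ℚ) := by
      rw [h1, hfq]
      push_cast
      rw [h0]
      ring
    exact_mod_cast this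
  rw [val, val, hnum, zpow_mul, zpow_natCast, S.E_step σ n]

lemma val_stable (σ : ℕ → Bool) {q : ℚ} {n : ℕ} (h : P q n) :
    ∀ m, n ≤ m → S.val σ q m = S.val σ q n := by
  intro m hm
  induction m, hm using Nat.le_induction with
  | base => rfl
  | succ m hm ih => rw [S.val_succ σ (P_mono h m hm)]; exact ih

lemma P_den (q : ℚ) : P q q.den := by
  obtain ⟨c, hc⟩ := Nat.dvd_factorial q.pos (Nat.le_succ _)
  refine ⟨q.num * c, ?_⟩
  have h1 : q * (q.den : ℚ) = (q.num : ℚ) := by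
    have hd : (q.den : ℚ) ≠ 0 := by exact_mod_cast q.den_nz
    exact ((div_eq_iff hd).mp (Rat.num_div_den q)).symm
  rw [hc]
  push_cast
  rw [← mul_assoc, h1]

/-- The embedding of `ℚ` (as a function). -/
noncomputable def phi (σ : ℕ → Bool) (q : ℚ) : G := S.val σ q q.den

lemma phi_eq (σ : ℕ → Bool) {q : ℚ} {n : ℕ} (h : P q n) : S.phi σ q = S.val σ q n := by
  have h1 := S.val_stable σ h (max n q.den) (le_max_left _ _)
  have h2 := S.val_stable σ (P_den q) (max n q.den) (le_max_right _ _)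
  rw [phi, ← h2, h1]

lemma phi_add (σ : ℕ → Bool) (q r : ℚ) : S.phi σ (q + r) = S.phi σ q * S.phi σ r := by
  set n := max (max q.den r.den) (q + r).den with hn
  have hq : P q n := P_mono (P_den q) _ (le_trans (le_max_left _ _) (le_max_left _ _))
  have hr : P r n := P_mono (P_den r) _ (le_trans (le_max_right _ _) (le_max_left _ _))
  have hs : P (q + r) n := P_mono (P_den _) _ (le_max_right _ _)
  have hnum : inum (q + r) n = inum q n + inum r n := by
    have : ((inum (q + r) n : ℤ) : ℚ) = ((inum q n + inum r n : ℤ) : ℚ) := by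
      rw [inum_cast hs]
      push_cast
      rw [inum_cast hq, inum_cast hr]
      ring
    exact_mod_cast this
  rw [S.phi_eq σ hs, S.phi_eq σ hq, S.phi_eq σ hr, val, val, val, hnum, zpow_add]

lemma phi_eq_E (σ : ℕ → Bool) (n : ℕ) :
    S.phi σ ((((n + 1)! : ℕ) : ℚ))⁻¹ = S.E σ n := by
  have hfac : (((n + 1)! : ℕ) : ℚ) ≠ 0 := by
    exact_mod_cast Nat.factorial_ne_zero (n + 1)
  have hP : P ((((n + 1)! : ℕ) : ℚ))⁻¹ n := ⟨1, by rw [inv_mul_cancel₀ hfac]; simp⟩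
  have hnum : inum ((((n + 1)! : ℕ) : ℚ))⁻¹ n = 1 := by
    have := inum_cast hP
    rw [inv_mul_cancel₀ hfac] at this
    exact_mod_cast this
  rw [S.phi_eq σ hP, val, hnum, zpow_one]

lemma phi_eq_one (σ : ℕ → Bool) {q : ℚ} (h : S.phi σ q = 1) : q = 0 := by
  have h0 := inum_cast (P_den q)
  rw [phi, val] at h
  have hz := S.E_zpow_eq_zero σ q.den h
  rw [hz] at h0
  have hfac : (((q.den + 1)! : ℕ) : ℚ) ≠ 0 := by
    exact_mod_cast Nat.factorial_ne_zero (q.den + 1)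
  have := mul_eq_zero.mp h0.symm
  simpa [hfac] using this

/-- The embedding of `ℚ`, as a monoid hom from `Multiplicative ℚ`. -/
noncomputable def hom (σ : ℕ → Bool) : Multiplicative ℚ →* G :=
  MonoidHom.mk' (fun q => S.phi σ q.toAdd) (fun a b => S.phi_add σ a.toAdd b.toAdd)

lemma hom_injective (σ : ℕ → Bool) : Function.Injective (S.hom σ) := by
  refine (injective_iff_map_eq_one (S.hom σ)).mpr ?_
  intro a ha
  have h0 : a.toAdd = 0 := S.phi_eq_one σ ha
  rw [← ofAdd_toAdd a, h0]
  rfl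

lemma E_mem (σ : ℕ → Bool) (n : ℕ) : S.E σ n ∈ (S.hom σ).range :=
  ⟨Multiplicative.ofAdd ((((n + 1)! : ℕ) : ℚ))⁻¹, S.phi_eq_E σ n⟩

lemma z_mem (σ : ℕ → Bool) : S.z ∈ (S.hom σ).range := S.E_mem σ 0

lemma root_unique (σ : ℕ → Bool) {a b : G} (ha : a ∈ (S.hom σ).range)
    (hb : b ∈ (S.hom σ).range) {k : ℕ} (hk : k ≠ 0) (h : a ^ k = b ^ k) : a = b := by
  obtain ⟨x, rfl⟩ := ha
  obtain ⟨y, rfl⟩ := hb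
  rw [← map_pow, ← map_pow] at h
  have hxy := S.hom_injective σ h
  have h1 : (k : ℚ) * x.toAdd = (k : ℚ) * y.toAdd := by
    have := congrArg Multiplicative.toAdd hxy
    simpa [toAdd_pow, nsmul_eq_mul] using this
  have h2 : x.toAdd = y.toAdd :=
    mul_left_cancel₀ (by exact_mod_cast hk : (k : ℚ) ≠ 0) h1
  have h3 : x = y := by
    rw [← ofAdd_toAdd x, ← ofAdd_toAdd y, h2]
  rw [h3]

lemma E_prefix {σ τ : ℕ → Bool} {n : ℕ} (h : ∀ k < n, σ k = τ k) :
    ∀ k, k ≤ n → S.E σ k = S.E τ k := by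
  intro k hk
  induction k with
  | zero => rfl
  | succ k ih =>
    have h1 : S.E σ k = S.E τ k := ih (le_trans (Nat.le_succ k) hk)
    show S.p (S.E σ k) k (σ k) = S.p (S.E τ k) k (τ k)
    rw [h1, h k (lt_of_lt_of_le (Nat.lt_succ_self k) hk)]

end Setup

end RatSubgroupAux

/-- If `z` is a central element of infinite order and every `g` with `gᵐ = z` (m ≥ 1)
has infinitely many n-th roots for every n ≥ 2, then `G` has continuum many subgroups
isomorphic to ℚ, all containing `z`. -/
theorem continuum_many_rat_subgroups {G : Type*} [Group G]
    (z : G) (hz : z ∈ Subgroup.center G) (hord : ¬ IsOfFinOrder z)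
    (hroots : ∀ g : G, ∀ m : ℕ, 1 ≤ m → g ^ m = z →
      ∀ n : ℕ, 2 ≤ n → {f : G | f ^ n = g}.Infinite) :
    Cardinal.continuum ≤
      Cardinal.mk {A : Subgroup G // Nonempty (A ≃* Multiplicative ℚ) ∧ z ∈ A} := by
  classical
  have key : ∀ (g : G) (n : ℕ), ∃ pp : Bool → G,
      (∃ m, 1 ≤ m ∧ g ^ m = z) →
      (∀ b, (pp b) ^ (n + 2) = g) ∧ pp false ≠ pp true := by
    intro g n
    by_cases h : ∃ m, 1 ≤ m ∧ g ^ m = z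
    · obtain ⟨m, hm1, hm2⟩ := h
      obtain ⟨a, ha, b, hb, hab⟩ := (hroots g m hm1 hm2 (n + 2) (by omega)).nontrivial
      refine ⟨fun x => bif x then b else a, fun _ => ⟨?_, ?_⟩⟩
      · intro x
        cases x
        · exact ha
        · exact hb
      · simpa using hab
    · exact ⟨fun _ => 1, fun h' => absurd h' h⟩
  choose p hp using key
  let S : RatSubgroupAux.Setup G :=
    ⟨z, hord, p, fun g n h => hp g n h⟩
  let Φ : (ℕ → Bool) → Subgroup G := fun σ => (S.hom σ).range
  have hΦmem : ∀ σ, z ∈ Φ σ := fun σ => S.z_mem σ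
  have hΦiso : ∀ σ, Nonempty ((Φ σ) ≃* Multiplicative ℚ) := fun σ =>
    ⟨(MonoidHom.ofInjective (S.hom_injective σ)).symm⟩
  have hΦinj : Function.Injective Φ := by
    intro σ τ hst
    by_contra hne
    have hex : ∃ n, σ n ≠ τ n := Function.ne_iff.mp hne
    let n₀ := Nat.find hex
    have hn₀ : σ n₀ ≠ τ n₀ := Nat.find_spec hex
    have hpre : ∀ k < n₀, σ k = τ k := fun k hk => not_not.mp (Nat.find_min hex hk)
    have hEeq : S.E σ n₀ = S.E τ n₀ := S.E_prefix hpre n₀ le_rfl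
    have hne2 : S.E σ (n₀ + 1) ≠ S.E τ (n₀ + 1) := S.E_ne σ τ n₀ hEeq hn₀
    have ha : S.E σ (n₀ + 1) ∈ (S.hom σ).range := S.E_mem σ (n₀ + 1)
    have hb : S.E τ (n₀ + 1) ∈ (S.hom σ).range := by
      have : (S.hom σ).range = (S.hom τ).range := hst
      rw [this]
      exact S.E_mem τ (n₀ + 1)
    have hk : S.E σ (n₀ + 1) ^ (n₀ + 1 + 1)! = S.E τ (n₀ + 1) ^ (n₀ + 1 + 1)! := by
      rw [S.E_pow σ, S.E_pow τ]
    exact hne2 (S.root_unique σ ha hb (Nat.factorial_ne_zero _) hk)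
  have hinj2 : Function.Injective (fun x : ULift.{_, 0} (ℕ → Bool) =>
      (⟨Φ x.down, hΦiso _, hΦmem _⟩ :
        {A : Subgroup G // Nonempty (A ≃* Multiplicative ℚ) ∧ z ∈ A})) := by
    intro x y h
    have h1 : Φ x.down = Φ y.down := congrArg Subtype.val h
    have := hΦinj h1
    cases x; cases y
    simpa using this
  have hle := Cardinal.mk_le_of_injective hinj2
  refine le_trans (le_of_eq ?_) hle
  rw [Cardinal.mk_uLift]
  rw [Cardinal.mk_arrow]
  simp [Cardinal.mk_bool, ← Cardinal.two_power_aleph0]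
end

section
/- Between any two nondegenerate closed intervals with dyadic rational endpoints there exists a piecewise-linear homeomorphism, with finitely many breakpoints, such that all slopes are powers of 2 and all breakpoints have dyadic rational coordinates. -/
/-!
A positive dyadic rational `k / 2 ^ m` is the sum of `k` copies of `2 ^ (-m)`, and halving a
summand shows it is then a sum of `N` integer powers of two for every `N ≥ k`. So `b - a` and
`d - c` can both be cut into the same number `N` of pieces of lengths `2 ^ f i` and `2 ^ g i`;
mapping the `i`-th piece of `[a, b]` affinely onto the `i`-th piece of `[c, d]` gives slope
`2 ^ (g i - f i)`, and all breakpoints are partial sums of dyadic rationals.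
-/

/-- A real number is a dyadic rational if it is of the form k / 2^m. -/
def IsDyadic (x : ℝ) : Prop := ∃ (k : ℤ) (m : ℕ), x = (k : ℝ) / 2 ^ m

open Finset Set

namespace IsDyadic

variable {x y : ℝ}

lemma add (hx : IsDyadic x) (hy : IsDyadic y) : IsDyadic (x + y) := by
  obtain ⟨k, m, rfl⟩ := hx
  obtain ⟨l, n, rfl⟩ := hy
  refine ⟨k * 2 ^ n + l * 2 ^ m, m + n, ?_⟩
  push_cast
  field_simp
  ring

lemma neg (hx : IsDyadic x) : IsDyadic (-x) := by
  obtain ⟨k, m, rfl⟩ := hx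
  exact ⟨-k, m, by push_cast; ring⟩

lemma sub (hx : IsDyadic x) (hy : IsDyadic y) : IsDyadic (x - y) := by
  simpa only [sub_eq_add_neg] using hx.add hy.neg

lemma mul (hx : IsDyadic x) (hy : IsDyadic y) : IsDyadic (x * y) := by
  obtain ⟨k, m, rfl⟩ := hx
  obtain ⟨l, n, rfl⟩ := hy
  exact ⟨k * l, m + n, by push_cast; ring⟩

end IsDyadic

lemma isDyadic_two_zpow (z : ℤ) : IsDyadic ((2 : ℝ) ^ z) := by
  obtain ⟨n, rfl | rfl⟩ := Int.eq_nat_or_neg z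
  · exact ⟨2 ^ n, 0, by simp⟩
  · exact ⟨1, n, by simp⟩

def IsSumOfTwoZPows (N : ℕ) (L : ℝ) : Prop :=
  ∃ e : ℕ → ℤ, ∑ i ∈ range N, (2 : ℝ) ^ e i = L

lemma IsSumOfTwoZPows.succ {N : ℕ} {L : ℝ} (h : IsSumOfTwoZPows (N + 1) L) :
    IsSumOfTwoZPows (N + 2) L := by
  obtain ⟨e, rfl⟩ := h
  refine ⟨fun i => if i < N then e i else e N - 1, ?_⟩
  have h_init : ∑ i ∈ range N, (2 : ℝ) ^ (if i < N then e i else e N - 1) =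
      ∑ i ∈ range N, (2 : ℝ) ^ e i :=
    sum_congr rfl fun i hi => by rw [if_pos (mem_range.mp hi)]
  have h_halves : (2 : ℝ) ^ (e N - 1) + 2 ^ (e N - 1) = 2 ^ e N := by
    rw [← two_mul, ← zpow_one_add₀ two_ne_zero, add_sub_cancel]
  rw [sum_range_succ, sum_range_succ]
  dsimp only
  rw [h_init, if_neg (lt_irrefl N), if_neg (by omega), add_assoc, h_halves, sum_range_succ]

lemma eventually_isSumOfTwoZPows {L : ℝ} (hL : IsDyadic L) (hpos : 0 < L) :
    ∀ᶠ N in Filter.atTop, IsSumOfTwoZPows N L := by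
  obtain ⟨k, m, rfl⟩ := hL
  have hk : 0 < k := by
    exact_mod_cast (div_pos_iff_of_pos_right (by positivity : (0 : ℝ) < 2 ^ m)).mp hpos
  refine Filter.eventually_atTop.2 ⟨k.toNat, fun N hN => ?_⟩
  induction N, hN using Nat.le_induction with
  | base =>
    refine ⟨fun _ => -m, ?_⟩
    rw [sum_const, card_range, nsmul_eq_mul, zpow_neg, zpow_natCast, div_eq_mul_inv]
    exact congrArg (· * _) (by exact_mod_cast Int.toNat_of_nonneg hk.le)
  | succ N hN ih =>
    obtain ⟨M, rfl⟩ := Nat.exists_eq_add_of_lt (by omega : 0 < N)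
    exact ih.succ

noncomputable def dyadicPartition (a : ℝ) (e : ℕ → ℤ) (i : ℕ) : ℝ :=
  a + ∑ j ∈ range i, (2 : ℝ) ^ e j

section DyadicPartition

variable (a : ℝ) (e : ℕ → ℤ)

@[simp]
lemma dyadicPartition_zero : dyadicPartition a e 0 = a := by
  simp [dyadicPartition]

lemma dyadicPartition_succ (i : ℕ) :
    dyadicPartition a e (i + 1) = dyadicPartition a e i + 2 ^ e i := by
  rw [dyadicPartition, sum_range_succ, ← add_assoc, dyadicPartition]

lemma dyadicPartition_succ_sub (i : ℕ) :
    dyadicPartition a e (i + 1) - dyadicPartition a e i = 2 ^ e i := by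
  rw [dyadicPartition_succ, add_sub_cancel_left]

lemma strictMono_dyadicPartition : StrictMono (dyadicPartition a e) :=
  strictMono_nat_of_lt_succ fun i => sub_pos.1 <| by
    rw [dyadicPartition_succ_sub]
    positivity

end DyadicPartition

lemma IsDyadic.dyadicPartition {a : ℝ} (ha : IsDyadic a) (e : ℕ → ℤ) (i : ℕ) :
    IsDyadic (dyadicPartition a e i) := by
  induction i with
  | zero => rwa [dyadicPartition_zero]
  | succ i ih => exact dyadicPartition_succ a e i ▸ ih.add (isDyadic_two_zpow (e i))

noncomputable def pieceSlope (q r : ℕ → ℝ) (i : ℕ) : ℝ :=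
  (r (i + 1) - r i) / (q (i + 1) - q i)

noncomputable def pieceIncrement (q r : ℕ → ℝ) (i : ℕ) (x : ℝ) : ℝ :=
  pieceSlope q r i * (min (max x (q i)) (q (i + 1)) - q i)

/-- Interpolates `q i ↦ r i` for `i ≤ N`; as a sum of clamped pieces it is continuous without any
case analysis. -/
noncomputable def piecewiseLinear (q r : ℕ → ℝ) (N : ℕ) (x : ℝ) : ℝ :=
  r 0 + ∑ i ∈ range N, pieceIncrement q r i x

section PiecewiseLinear

variable {q : ℕ → ℝ} (r : ℕ → ℝ) {i j : ℕ} {x : ℝ}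

lemma pieceIncrement_of_le (hq : StrictMono q) (hx : q (i + 1) ≤ x) :
    pieceIncrement q r i x = r (i + 1) - r i := by
  have hlt : q i < q (i + 1) := hq i.lt_succ_self
  rw [pieceIncrement, pieceSlope, max_eq_left (hlt.le.trans hx), min_eq_right hx,
    div_mul_cancel₀ _ (sub_pos.2 hlt).ne']

lemma pieceIncrement_of_ge (hq : Monotone q) (hx : x ≤ q i) : pieceIncrement q r i x = 0 := by
  rw [pieceIncrement, max_eq_right hx, min_eq_left (hq i.le_succ), sub_self, mul_zero]

lemma sum_pieceIncrement_range_of_le (hq : StrictMono q) (hx : q j ≤ x) :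
    ∑ i ∈ range j, pieceIncrement q r i x = r j - r 0 := by
  rw [← sum_range_sub]
  refine sum_congr rfl fun i hi => pieceIncrement_of_le r hq ?_
  exact (hq.monotone (mem_range.1 hi)).trans hx

lemma sum_pieceIncrement_Ico_of_ge (hq : Monotone q) (N : ℕ) (hx : x ≤ q j) :
    ∑ i ∈ Ico j N, pieceIncrement q r i x = 0 :=
  sum_eq_zero fun _ hi => pieceIncrement_of_ge r hq (hx.trans (hq (mem_Ico.1 hi).1))

variable {N : ℕ}

lemma piecewiseLinear_apply (hq : StrictMono q) (hj : j ≤ N) :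
    piecewiseLinear q r N (q j) = r j := by
  rw [piecewiseLinear, ← sum_range_add_sum_Ico _ hj, sum_pieceIncrement_range_of_le r hq le_rfl,
    sum_pieceIncrement_Ico_of_ge r hq.monotone N le_rfl]
  ring

lemma piecewiseLinear_eq_of_mem_Icc (hq : StrictMono q) (hj : j < N)
    (hx : x ∈ Icc (q j) (q (j + 1))) :
    piecewiseLinear q r N x = r j + pieceSlope q r j * (x - q j) := by
  rw [piecewiseLinear, ← sum_range_add_sum_Ico _ hj.le, sum_eq_sum_Ico_succ_bot hj,
    sum_pieceIncrement_range_of_le r hq hx.1, sum_pieceIncrement_Ico_of_ge r hq.monotone N hx.2,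
    pieceIncrement, max_eq_left hx.1, min_eq_left hx.2]
  ring

lemma continuous_piecewiseLinear (q r : ℕ → ℝ) (N : ℕ) : Continuous (piecewiseLinear q r N) := by
  unfold piecewiseLinear pieceIncrement
  fun_prop

lemma strictMonoOn_piecewiseLinear (hq : StrictMono q) (hr : StrictMono r) :
    StrictMonoOn (piecewiseLinear q r N) (Icc (q 0) (q N)) := by
  suffices ∀ n ≤ N, StrictMonoOn (piecewiseLinear q r N) (Icc (q 0) (q n)) from this N le_rfl
  intro n hn
  induction n with
  | zero => exact (subsingleton_Icc_of_ge le_rfl).strictMonoOn _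
  | succ n ih =>
    have hslope : 0 < pieceSlope q r n :=
      div_pos (sub_pos.2 (hr n.lt_succ_self)) (sub_pos.2 (hq n.lt_succ_self))
    have h_piece : StrictMonoOn (piecewiseLinear q r N) (Icc (q n) (q (n + 1))) := by
      intro x hx y hy hxy
      rw [piecewiseLinear_eq_of_mem_Icc r hq hn hx, piecewiseLinear_eq_of_mem_Icc r hq hn hy]
      gcongr
    rw [← Icc_union_Icc_eq_Icc (hq.monotone n.zero_le) (hq n.lt_succ_self).le]
    exact (ih (by omega)).union h_piece (isGreatest_Icc (hq.monotone n.zero_le))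
      (isLeast_Icc (hq n.lt_succ_self).le)

lemma piecewiseLinear_image_Icc (hq : StrictMono q) (hr : StrictMono r) :
    piecewiseLinear q r N '' Icc (q 0) (q N) = Icc (r 0) (r N) := by
  rw [(continuous_piecewiseLinear q r N).continuousOn.image_Icc_of_monotoneOn
    (hq.monotone N.zero_le) (strictMonoOn_piecewiseLinear r hq hr).monotoneOn,
    piecewiseLinear_apply r hq N.zero_le, piecewiseLinear_apply r hq le_rfl]

end PiecewiseLinear

lemma pieceSlope_dyadicPartition (a c : ℝ) (f g : ℕ → ℤ) (i : ℕ) :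
    pieceSlope (dyadicPartition a f) (dyadicPartition c g) i = 2 ^ (g i - f i) := by
  rw [pieceSlope, dyadicPartition_succ_sub, dyadicPartition_succ_sub, zpow_sub₀ two_ne_zero]

/-- Between any two nondegenerate closed intervals with dyadic rational endpoints there
is an increasing piecewise-linear homeomorphism with finitely many breakpoints, all
slopes powers of 2, and all breakpoints at dyadic rational coordinates. -/
theorem exists_thompson_like_homeomorphism (a b c d : ℝ)
    (hab : a < b) (hcd : c < d)
    (ha : IsDyadic a) (hb : IsDyadic b) (hc : IsDyadic c) (hd : IsDyadic d) :
    ∃ (h : ℝ → ℝ) (N : ℕ) (q : ℕ → ℝ),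
      q 0 = a ∧ q N = b ∧ (∀ i : ℕ, i < N → q i < q (i + 1)) ∧
      (∀ i : ℕ, i ≤ N → IsDyadic (q i) ∧ IsDyadic (h (q i))) ∧
      (∀ i : ℕ, i < N → ∃ (n : ℤ) (e : ℝ), IsDyadic e ∧
        ∀ x ∈ Set.Icc (q i) (q (i + 1)), h x = (2 : ℝ) ^ n * x + e) ∧
      StrictMonoOn h (Set.Icc a b) ∧ h '' Set.Icc a b = Set.Icc c d ∧
      h a = c ∧ h b = d := by
  obtain ⟨N, ⟨f, hf⟩, g, hg⟩ := ((eventually_isSumOfTwoZPows (hb.sub ha) (sub_pos.2 hab)).and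
    (eventually_isSumOfTwoZPows (hd.sub hc) (sub_pos.2 hcd))).exists
  set q := dyadicPartition a f
  set r := dyadicPartition c g
  have hq : StrictMono q := strictMono_dyadicPartition a f
  have hr : StrictMono r := strictMono_dyadicPartition c g
  have hq0 : q 0 = a := dyadicPartition_zero a f
  have hr0 : r 0 = c := dyadicPartition_zero c g
  have hqN : q N = b := by simp only [q, dyadicPartition, hf, add_sub_cancel]
  have hrN : r N = d := by simp only [r, dyadicPartition, hg, add_sub_cancel]
  have h_affine (i : ℕ) (hi : i < N) (x : ℝ) (hx : x ∈ Icc (q i) (q (i + 1))) :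
      piecewiseLinear q r N x = 2 ^ (g i - f i) * x + (r i - 2 ^ (g i - f i) * q i) := by
    rw [piecewiseLinear_eq_of_mem_Icc r hq hi hx, pieceSlope_dyadicPartition]
    ring
  refine ⟨piecewiseLinear q r N, N, q, hq0, hqN, fun i _ => hq i.lt_succ_self,
    fun i hi => ⟨ha.dyadicPartition f i, piecewiseLinear_apply r hq hi ▸ hc.dyadicPartition g i⟩,
    fun i hi => ⟨g i - f i, _, (hc.dyadicPartition g i).sub
      ((isDyadic_two_zpow _).mul (ha.dyadicPartition f i)), h_affine i hi⟩, ?_⟩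
  have h0 := piecewiseLinear_apply r hq N.zero_le
  have hN := piecewiseLinear_apply r hq (le_refl N)
  have hmono := strictMonoOn_piecewiseLinear (N := N) r hq hr
  have himage := piecewiseLinear_image_Icc (N := N) r hq hr
  simp only [hq0, hr0, hqN, hrN] at h0 hN hmono himage
  exact ⟨hmono, himage, h0, hN⟩
end
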